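/- arXiv:1903.05046 — 3 statements merged into one kernel-verified Lean document; each statement's English description precedes it below -/
import Mathlib

section
/- Let p, k ∈ ℕ with k ≤ p and let S ~ Hyp(p,k,k). Then for every s ∈ {1, …, k}, ℙ(S = s) ≤ C(k,s)·( k/(p − k + 1) )^s. -/
open Finset

/-- The pmf of the hypergeometric distribution `Hyp(p,k,k)` at `s`:
`ℙ(S = s) = C(k,s) C(p−k, k−s) / C(p,k)`. -/
noncomputable def hypPMF (p k s : ℕ) : ℝ :=
  (k.choose s * (p - k).choose (k - s) : ℝ) / p.choose k

lemma factor_bound (p k s : ℕ) (hkp : k ≤ p) (hsk : s ≤ k) :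
    (k - s) * (p - k + 1) ≤ k * (p - s) := by
  obtain ⟨a, rfl⟩ := Nat.exists_eq_add_of_le hsk
  obtain ⟨b, rfl⟩ := Nat.exists_eq_add_of_le hkp
  simp only [Nat.add_sub_cancel_left, show s + a + b - s = a + b by omega]
  rcases Nat.eq_zero_or_pos a with h | h
  · simp [h]
  · nlinarith

lemma lemB (p k : ℕ) (hkp : k ≤ p) :
    ∀ s, s ≤ k → k.descFactorial s * (p - k + 1) ^ s ≤ k ^ s * p.descFactorial s := by
  intro s
  induction s with
  | zero => simp
  | succ n ih =>
    intro h
    rw [Nat.descFactorial_succ, Nat.descFactorial_succ, pow_succ, pow_succ]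
    calc (k - n) * k.descFactorial n * ((p - k + 1) ^ n * (p - k + 1))
        = ((k - n) * (p - k + 1)) * (k.descFactorial n * (p - k + 1) ^ n) := by ring
      _ ≤ (k * (p - n)) * (k ^ n * p.descFactorial n) :=
          Nat.mul_le_mul (factor_bound p k n hkp (le_of_lt h)) (ih (le_of_lt h))
      _ = k ^ n * k * ((p - n) * p.descFactorial n) := by ring

lemma lemA (p k s : ℕ) (hkp : k ≤ p) (hsk : s ≤ k) :
    (p - k).choose (k - s) * p.descFactorial s ≤ p.choose k * k.descFactorial s := by
  have hc : Nat.choose (p - k) (k - s) * Nat.factorial (k - s) = (p - k).descFactorial (k - s) := by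
    rw [Nat.descFactorial_eq_factorial_mul_choose]; ring
  have hk : k.descFactorial s * Nat.factorial (k - s) = Nat.factorial k := by
    rw [mul_comm, Nat.factorial_mul_descFactorial hsk]
  have hsplit : (p - s).descFactorial (k - s) * p.descFactorial s = p.descFactorial k :=
    Nat.descFactorial_mul_descFactorial hsk
  have hmono : (p - k).descFactorial (k - s) ≤ (p - s).descFactorial (k - s) :=
    Nat.descFactorial_le _ (Nat.sub_le_sub_left hsk p)
  have hdfk : p.descFactorial k = Nat.factorial k * p.choose k := Nat.descFactorial_eq_factorial_mul_choose p k
  have key : (p - k).choose (k - s) * p.descFactorial s * Nat.factorial (k - s)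
      ≤ p.choose k * k.descFactorial s * Nat.factorial (k - s) := by
    calc (p - k).choose (k - s) * p.descFactorial s * Nat.factorial (k - s)
        = (p - k).descFactorial (k - s) * p.descFactorial s := by rw [← hc]; ring
      _ ≤ (p - s).descFactorial (k - s) * p.descFactorial s := Nat.mul_le_mul_right _ hmono
      _ = Nat.factorial k * p.choose k := by rw [hsplit, hdfk]
      _ = p.choose k * k.descFactorial s * Nat.factorial (k - s) := by rw [← hk]; ring
  exact Nat.le_of_mul_le_mul_right key (Nat.factorial_pos _)

lemma lemC (p k s : ℕ) (hkp : k ≤ p) (hsk : s ≤ k) :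
    (p - k).choose (k - s) * (p - k + 1) ^ s ≤ k ^ s * p.choose k := by
  have hdfs : 0 < k.descFactorial s := Nat.pos_of_ne_zero (fun h => absurd (Nat.descFactorial_eq_zero_iff_lt.mp h) (by omega))
  have key : (p - k).choose (k - s) * (p - k + 1) ^ s * k.descFactorial s
      ≤ k ^ s * p.choose k * k.descFactorial s := by
    have hB := lemB p k hkp s hsk
    have hA := lemA p k s hkp hsk
    have hpdfs : 0 < p.descFactorial s := Nat.pos_of_ne_zero (fun h => absurd (Nat.descFactorial_eq_zero_iff_lt.mp h) (by omega))
    have h1 : (p - k).choose (k - s) * (p - k + 1) ^ s * k.descFactorial s * p.descFactorial s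
        ≤ k ^ s * p.choose k * k.descFactorial s * p.descFactorial s := by
      calc (p - k).choose (k - s) * (p - k + 1) ^ s * k.descFactorial s * p.descFactorial s
          = (p - k).choose (k - s) * (k.descFactorial s * (p - k + 1) ^ s) * p.descFactorial s := by
            ring
        _ ≤ (p - k).choose (k - s) * (k ^ s * p.descFactorial s) * p.descFactorial s := by
            exact Nat.mul_le_mul_right _ (Nat.mul_le_mul_left _ hB)
        _ = ((p - k).choose (k - s) * p.descFactorial s) * (k ^ s * p.descFactorial s) := by ring
        _ ≤ (p.choose k * k.descFactorial s) * (k ^ s * p.descFactorial s) :=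
            Nat.mul_le_mul_right _ hA
        _ = k ^ s * p.choose k * k.descFactorial s * p.descFactorial s := by ring
    exact Nat.le_of_mul_le_mul_right h1 hpdfs
  exact Nat.le_of_mul_le_mul_right key hdfs

/-- Lemma `lmm:Hyp_bound`: for `k ≤ p`, `S ~ Hyp(p,k,k)` and any
`s ∈ {1,…,k}`, `ℙ(S = s) ≤ C(k,s) (k/(p−k+1))^s`. -/
theorem hypergeometric_pmf_bound
    (p k s : ℕ) (hkp : k ≤ p) (hs1 : 1 ≤ s) (hsk : s ≤ k) :
    hypPMF p k s ≤ (k.choose s : ℝ) * ((k : ℝ) / ((p : ℝ) - k + 1)) ^ s := by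
  have hcast : (p : ℝ) - k + 1 = ((p - k + 1 : ℕ) : ℝ) := by
    push_cast [hkp]; ring
  rw [hypPMF, hcast, div_pow]
  have hden : (0 : ℝ) < ((p - k + 1 : ℕ) : ℝ) ^ s := by positivity
  have hchoose : (0 : ℝ) < (p.choose k : ℝ) := by
    exact_mod_cast Nat.choose_pos hkp
  rw [← mul_div_assoc, div_le_div_iff₀ hchoose hden]
  have hC := lemC p k s hkp hsk
  have hC' : ((p - k).choose (k - s) * ((p - k + 1)) ^ s : ℝ) ≤ (k ^ s * p.choose k : ℝ) := by
    exact_mod_cast hC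
  calc (k.choose s : ℝ) * ((p - k).choose (k - s)) * ((p - k + 1 : ℕ) : ℝ) ^ s
      = (k.choose s : ℝ) * (((p - k).choose (k - s)) * ((p - k + 1 : ℕ) : ℝ) ^ s) := by
        push_cast; ring
    _ ≤ (k.choose s : ℝ) * ((k : ℝ) ^ s * (p.choose k : ℝ)) := by
        apply mul_le_mul_of_nonneg_left _ (by positivity)
        exact_mod_cast hC'
    _ = (k.choose s : ℝ) * (k : ℝ) ^ s * (p.choose k) := by ring
end

section
/- Fix δ ∈ (0, 1/2) and ε ∈ [0, 1/2], and suppose k ≤ p^{1/2−δ}. There exists a constant C₁ = C₁(δ) > 0 such that if k/σ² ≥ C₁, then for all real s ∈ [1, εk], the function f(s) = −s·log(p/k²) − n*·log(1 − s/(k + σ²)) satisfies f(s) ≤ −(1/2)·s·log(p/k²). -/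
open Real

noncomputable section

/-- The critical sample size `n* = 2k log(p/k) / log(1 + k/σ²)`. -/
def nstar (p k : ℕ) (σ : ℝ) : ℝ :=
  2 * k * Real.log ((p : ℝ) / (k : ℝ)) / Real.log (1 + (k : ℝ) / σ ^ 2)

set_option maxHeartbeats 800000 in
/-- Claim in Lemma `lmm:MGF_bound`: fix `δ ∈ (0,1/2)`. There is
`C₁ = C₁(δ) > 0` such that for any `ε ∈ [0,1/2]`, if `k ≤ p^{1/2−δ}` and `k/σ² ≥ C₁`, then
for every real `s ∈ [1, εk]`, the function
`f(s) = −s log(p/k²) − n* log(1 − s/(k+σ²))` satisfies `f(s) ≤ −(1/2) s log(p/k²)`. -/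
theorem claim_f_bound
    (δ : ℝ) (hδ1 : 0 < δ) (hδ2 : δ < 1 / 2) :
    ∃ C₁ > 0, ∀ (ε : ℝ), 0 ≤ ε → ε ≤ 1 / 2 →
      ∀ (p k : ℕ) (σ : ℝ), 0 < σ →
        (k : ℝ) ≤ (p : ℝ) ^ ((1 : ℝ) / 2 - δ) →
        C₁ ≤ (k : ℝ) / σ ^ 2 →
        ∀ s : ℝ, 1 ≤ s → s ≤ ε * k →
          -s * Real.log ((p : ℝ) / (k : ℝ) ^ 2) -
              nstar p k σ * Real.log (1 - s / ((k : ℝ) + σ ^ 2)) ≤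
            -(1 / 2) * s * Real.log ((p : ℝ) / (k : ℝ) ^ 2) := by

  refine ⟨Real.exp (2*(1+2*δ)/δ), Real.exp_pos _, ?_⟩
  intro ε hε0 hε1 p k σ hσ hkp hC s hs1 hs2
  have hk0 : (0:ℝ) ≤ k := Nat.cast_nonneg k
  have hk2 : (2:ℝ) ≤ k := by nlinarith
  have hp1 : (1:ℝ) < p := by
    by_contra h
    push_neg at h
    have h2 : (p:ℝ) ^ ((1:ℝ)/2 - δ) ≤ 1 :=
      Real.rpow_le_one (by positivity) h (by linarith)
    linarith
  have hp0 : (0:ℝ) < p := by linarith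
  have hσ2 : (0:ℝ) < σ^2 := by positivity
  have hs0 : (0:ℝ) ≤ s := by linarith
  set a := Real.log (k:ℝ) with ha_def
  set b := Real.log (p:ℝ) with hb_def
  have ha0 : 0 ≤ a := Real.log_nonneg (by linarith)
  have hb0 : 0 ≤ b := Real.log_nonneg (by linarith)
  have hab : a ≤ (1/2 - δ) * b := by
    have h1 : Real.log (k:ℝ) ≤ Real.log ((p:ℝ) ^ ((1:ℝ)/2 - δ)) :=
      Real.log_le_log (by linarith) hkp
    rw [Real.log_rpow hp0] at h1
    rw [ha_def, hb_def]
    exact h1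
  set M := Real.log (1 + (k:ℝ)/σ^2) with hM_def
  have hM : 2*(1+2*δ)/δ ≤ M := by
    have h1 : Real.exp (2*(1+2*δ)/δ) ≤ 1 + (k:ℝ)/σ^2 := by linarith
    have h2 := Real.log_le_log (Real.exp_pos _) h1
    rw [Real.log_exp] at h2
    rw [hM_def]
    exact h2
  have hMpos : 0 < M := lt_of_lt_of_le (by positivity) hM
  set T := (k:ℝ) + σ^2 with hT_def
  have hT0 : 0 < T := by positivity
  have hsk : s ≤ (k:ℝ)/2 := by nlinarith
  have hsT : s/T ≤ 1/2 := by
    rw [div_le_iff₀ hT0]; rw [hT_def]; nlinarith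
  have hsT0 : 0 ≤ s/T := by positivity
  have hlog1x : -Real.log (1 - s/T) ≤ 2*(s/T) := by
    set x := s/T with hx_def
    have hpos : 0 < 1 - x := by linarith
    have h := Real.log_le_sub_one_of_pos (show (0:ℝ) < (1-x)⁻¹ by positivity)
    rw [Real.log_inv] at h
    have h2 : (1-x)⁻¹ ≤ 1 + 2*x := by
      rw [inv_eq_one_div, div_le_iff₀ hpos]; nlinarith
    linarith
  have hb2a : 0 ≤ b - 2*a := by nlinarith
  have hba : 0 ≤ b - a := by linarith
  have h8 : 8*(b-a) ≤ M*(b-2*a) := by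
    have h1 : 8*(b-a) ≤ (2*(1+2*δ)/δ) * (b-2*a) := by
      rw [div_mul_eq_mul_div, le_div_iff₀ hδ1]; nlinarith
    have h2 := mul_le_mul_of_nonneg_right hM hb2a
    linarith
  have hL2 : Real.log ((p:ℝ)/(k:ℝ)^2) = b - 2*a := by
    rw [Real.log_div (by positivity) (by positivity), Real.log_pow]
    try rw [ha_def, hb_def]
    try push_cast
    try ring
  have hn : nstar p k σ = 2*(k:ℝ)*(b-a)/M := by
    rw [nstar, Real.log_div (by positivity) (by positivity)]
    try rw [ha_def, hb_def, hM_def]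
  have hcoef : 0 ≤ 2*(k:ℝ)*(b-a)/M := div_nonneg (by nlinarith) hMpos.le
  have step1 : (2*(k:ℝ)*(b-a)/M) * (-Real.log (1 - s/T)) ≤ (2*(k:ℝ)*(b-a)/M) * (2*(s/T)) :=
    mul_le_mul_of_nonneg_left hlog1x hcoef
  have step2 : (2*(k:ℝ)*(b-a)/M) * (2*(s/T)) ≤ (1/2)*s*(b-2*a) := by
    have he : (2*(k:ℝ)*(b-a)/M) * (2*(s/T)) = (2*(k:ℝ)*(b-a)*(2*s))/(M*T) := by
      field_simp
      try ring
    rw [he, div_le_iff₀ (by positivity)]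
    nlinarith [mul_le_mul_of_nonneg_right h8 (mul_nonneg hs0 hT0.le),
      mul_nonneg (mul_nonneg hσ2.le hba) hs0]
  rw [hL2, hn]
  have h := step1.trans step2
  rw [mul_neg] at h
  linarith


end
end

section
/- There exists a universal constant C₂ > 0 such that the following holds. Suppose k/σ² ≥ C₂ (and p/k is sufficiently large). Set ε = log log(p/k)/(2·log(p/k)), τ = k·(1 − 1/log²(1 + k/σ²)), and define g(s) = −s·log(p/k) − n*·log(1 − s/(k + σ²)) for s ∈ [0, k]. Then g(τ) ≤ −(1/2)·k·log(p/k) and g(εk) ≤ −(εk/2)·log(p/k). -/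
open Real

noncomputable section

/-!
Write `A = log (1 + k/σ²)` and `L = log (p/k)`, so that `n* = 2kL/A`. At `s = τ` the argument of
the logarithm is `(1 + r/A²)/(1 + r)` with `r = k/σ²`, so `g(τ) = kL (1 + 1/A² - 2 log (1 + r/A²) / A)`;
since `log (1 + r/A²) ≥ A - log 2 - 2 log A`, this is below `-kL/2` once `A` is large.
At `s = εk` the argument `x = εk/(k + σ²)` is at most `ε ≤ 1/2`, where `-log (1 - x) ≤ 2x`,
so the second term of `g(εk)` is at most `4εkL/A ≤ εkL/2` as soon as `A ≥ 8`.
-/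

/-- The paper's `g`, with `L = log (p/k)`, `n = n*` and `c = k + σ²`. -/
def g (L n c s : ℝ) : ℝ := -s * L - n * log (1 - s / c)

theorem neg_log_one_sub_le_two_mul {x : ℝ} (hx0 : 0 ≤ x) (hx : x ≤ 1 / 2) :
    -log (1 - x) ≤ 2 * x := by
  have h1x : 0 < 1 - x := by linarith
  have hlog := one_sub_inv_le_log_of_pos h1x
  have hinv : 1 - (1 - x)⁻¹ = -(x / (1 - x)) := by field_simp; ring
  have hdiv : x / (1 - x) ≤ 2 * x := by
    rw [div_le_iff₀ h1x]
    nlinarith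
  linarith

theorem log_le_two_mul_sqrt_sub_two {a : ℝ} (ha : 0 < a) : log a ≤ 2 * √a - 2 := by
  have h := log_le_sub_one_of_pos (sqrt_pos.2 ha)
  rw [log_sqrt ha.le] at h
  linarith

theorem three_quarters_mul_add_inv_le {a : ℝ} (ha : 400 ≤ a) :
    3 / 4 * a + 1 / (2 * a) ≤ a - log 2 - 2 * log a := by
  have hs : 20 ≤ √a := le_sqrt_of_sq_le (by linarith)
  have hsa : √a ^ 2 = a := sq_sqrt (by linarith)
  have hloga := log_le_two_mul_sqrt_sub_two (show 0 < a by linarith)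
  have hinv : 1 / (2 * a) ≤ 1 := by rw [div_le_one (by linarith)]; linarith
  nlinarith [log_two_lt_d9, mul_le_mul_of_nonneg_left (by linarith : (16 : ℝ) ≤ √a)
    (by linarith : (0 : ℝ) ≤ √a)]

theorem log_one_add_sub_le_log_one_add_div_log_sq {r : ℝ} (hr : 1 ≤ r) :
    log (1 + r) - log 2 - 2 * log (log (1 + r)) ≤ log (1 + r / log (1 + r) ^ 2) := by
  have hA : 0 < log (1 + r) := log_pos (by linarith)
  have hupper : log (1 + r) ≤ log 2 + log r := by
    rw [← log_mul two_ne_zero (by positivity)]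
    exact log_le_log (by positivity) (by linarith)
  have hmono : log (r / log (1 + r) ^ 2) ≤ log (1 + r / log (1 + r) ^ 2) :=
    log_le_log (by positivity) (by linarith)
  rw [log_div (by positivity) (by positivity), log_pow] at hmono
  push_cast at hmono
  linarith

theorem four_hundred_le_log_one_add {r : ℝ} (hr : exp 400 ≤ r) : 400 ≤ log (1 + r) :=
  (le_log_iff_exp_le (by linarith [exp_pos 400])).2 (by linarith)

theorem g_tau_le {k σ L : ℝ} (hL : 0 ≤ L) (hr : exp 400 ≤ k / σ ^ 2) :
    let A := log (1 + k / σ ^ 2)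
    g L (2 * k * L / A) (k + σ ^ 2) (k * (1 - 1 / A ^ 2)) ≤ -(1 / 2) * k * L := by
  intro A
  set r := k / σ ^ 2 with hr_def
  have hr1 : 1 ≤ r := (one_le_exp (by norm_num)).trans hr
  have hσ : σ ≠ 0 := by
    rintro rfl
    norm_num [hr_def] at hr1
  have hk : 0 < k := by
    have : k = r * σ ^ 2 := by rw [hr_def]; field_simp
    rw [this]; positivity
  have hA : 400 ≤ A := four_hundred_le_log_one_add hr
  have hD : 3 / 4 * A + 1 / (2 * A) ≤ log (1 + r / A ^ 2) :=
    (three_quarters_mul_add_inv_le hA).trans (log_one_add_sub_le_log_one_add_div_log_sq hr1)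
  have harg : 1 - k * (1 - 1 / A ^ 2) / (k + σ ^ 2) = (1 + r / A ^ 2) / (1 + r) := by
    rw [hr_def]
    field_simp
    ring
  have hkey : 3 / 2 + 1 / A ^ 2 ≤ 2 * log (1 + r / A ^ 2) / A := by
    rw [le_div_iff₀ (by linarith)]
    have : (3 / 2 + 1 / A ^ 2) * A = 2 * (3 / 4 * A + 1 / (2 * A)) := by field_simp; ring
    linarith
  calc g L (2 * k * L / A) (k + σ ^ 2) (k * (1 - 1 / A ^ 2))
      = k * L * (1 + 1 / A ^ 2 - 2 * log (1 + r / A ^ 2) / A) := by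
        rw [g, harg, log_div (by positivity) (by positivity)]
        field_simp
        ring
    _ ≤ k * L * (-(1 / 2)) := by gcongr; linarith
    _ = -(1 / 2) * k * L := by ring

theorem g_eps_le {k c L A ε : ℝ} (hk : 0 < k) (hkc : k ≤ c) (hL : 0 ≤ L) (hA : 8 ≤ A)
    (hε0 : 0 ≤ ε) (hε : ε ≤ 1 / 2) :
    g L (2 * k * L / A) c (ε * k) ≤ -(ε * k / 2) * L := by
  have hc : 0 < c := hk.trans_le hkc
  have hx : ε * k / c ≤ ε := div_le_of_le_mul₀ hc.le hε0 (by nlinarith)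
  have hlog := neg_log_one_sub_le_two_mul (by positivity) (hx.trans hε)
  have hratio : 4 / A * (k / c) ≤ 1 / 2 * 1 :=
    mul_le_mul ((div_le_iff₀ (by linarith)).2 (by linarith)) ((div_le_one hc).2 hkc)
      (by positivity) (by norm_num)
  calc g L (2 * k * L / A) c (ε * k)
      = -(ε * k) * L + 2 * k * L / A * -log (1 - ε * k / c) := by rw [g]; ring
    _ ≤ -(ε * k) * L + 2 * k * L / A * (2 * (ε * k / c)) := by gcongr
    _ = -(ε * k) * L + ε * k * L * (4 / A * (k / c)) := by ring
    _ ≤ -(ε * k) * L + ε * k * L * (1 / 2 * 1) := by gcongr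
    _ = -(ε * k / 2) * L := by ring

/-- Claim `claim:g_bound`: there is a universal `C₂ > 0` (and a universal
threshold `M` for `p/k`) such that if `k/σ² ≥ C₂` and `p/k ≥ M`, then with
`ε = log log(p/k)/(2 log(p/k))`, `τ = k(1 − 1/log²(1+k/σ²))` and
`g(s) = −s log(p/k) − n* log(1 − s/(k+σ²))`, one has `g(τ) ≤ −(1/2)k log(p/k)` and
`g(εk) ≤ −(εk/2) log(p/k)`. -/
theorem claim_g_bound :
    ∃ C₂ > 0, ∃ M > 0, ∀ (p k : ℕ) (σ : ℝ), 0 < σ → 0 < k →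
      C₂ ≤ (k : ℝ) / σ ^ 2 → M ≤ (p : ℝ) / k →
      (-((k : ℝ) * (1 - 1 / (Real.log (1 + (k : ℝ) / σ ^ 2)) ^ 2)) *
            Real.log ((p : ℝ) / k) -
          nstar p k σ *
            Real.log (1 - (k : ℝ) * (1 - 1 / (Real.log (1 + (k : ℝ) / σ ^ 2)) ^ 2) /
              ((k : ℝ) + σ ^ 2)) ≤
        -(1 / 2) * k * Real.log ((p : ℝ) / k)) ∧
      (-(Real.log (Real.log ((p : ℝ) / k)) / (2 * Real.log ((p : ℝ) / k)) * k) *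
            Real.log ((p : ℝ) / k) -
          nstar p k σ *
            Real.log (1 - Real.log (Real.log ((p : ℝ) / k)) /
              (2 * Real.log ((p : ℝ) / k)) * k / ((k : ℝ) + σ ^ 2)) ≤
        -(Real.log (Real.log ((p : ℝ) / k)) / (2 * Real.log ((p : ℝ) / k)) * k / 2) *
          Real.log ((p : ℝ) / k)) := by
  refine ⟨exp 400, exp_pos _, exp 1, exp_pos _, fun p k σ _ hk hC hM => ?_⟩
  have hL : 1 ≤ log ((p : ℝ) / k) := (le_log_iff_exp_le ((exp_pos 1).trans_le hM)).2 hM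
  have hA : 8 ≤ log (1 + (k : ℝ) / σ ^ 2) := by linarith [four_hundred_le_log_one_add hC]
  have hε : log (log ((p : ℝ) / k)) / (2 * log ((p : ℝ) / k)) ≤ 1 / 2 := by
    rw [div_le_iff₀ (by positivity)]
    linarith [log_le_self (zero_le_one.trans hL)]
  exact ⟨g_tau_le (by linarith) hC,
    g_eps_le (by positivity) (by linarith [sq_nonneg σ]) (by linarith) hA
      (div_nonneg (log_nonneg hL) (by linarith)) hε⟩

end
end
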